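/- For every τ in the upper half-plane H, ℘̃a(1/2, τ − 1) = − ℘̃a(1/2, τ); in particular the function τ ↦ ℘̃a(1/2, τ) is 2-periodic but not 1-periodic in τ. -/

import Mathlib

/-!
Summing the absolutely convergent double series row by row writes `π² ℘̃a(z, τ)` as a series over
`m ∈ ℤ` of differences of values of `S(w) = ∑ₙ (w + n)⁻²`, which is `1`-periodic and even.
Replacing `τ` by `τ - 1` shifts the `m`-th row by `-(m + 1/2)`; for `z = 1/2` this swaps the two
terms of every row and so flips the sign. On the imaginary axis the `q`-expansion
`S(w) = -4π² q / (1 - q)²`, `q = e^{2πiw}`, makes every row of `π² ℘̃a(1/2, iy)` a negative real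
number, so `℘̃a(1/2, i) ≠ 0`, which 1-periodicity would contradict.
-/

open Complex

/-- The normalized Weierstrass function
`℘a(z,τ) = π⁻² (1/z² + Σ_{ω ∈ Λ_τ, ω ≠ 0} (1/(z-ω)² − 1/ω²))`, where `Λ_τ = ℤ + τℤ`. -/
noncomputable def wpa (z τ : ℂ) : ℂ :=
  (Real.pi : ℂ)⁻¹ ^ 2 * (1 / z ^ 2 +
    ∑' p : ℤ × ℤ, if p = 0 then 0 else
      (1 / (z - ((p.1 : ℂ) + (p.2 : ℂ) * τ)) ^ 2 - 1 / ((p.1 : ℂ) + (p.2 : ℂ) * τ) ^ 2))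

/-- The renormalized function
`℘̃a(z,τ) = π⁻² Σ_{(n,m)∈ℤ²} (1/(z+(n+1/2)+(m+1/2)τ)² − 1/((n+1/2)+(m+1/2)τ)²)`. -/
noncomputable def wpt (z τ : ℂ) : ℂ :=
  (Real.pi : ℂ)⁻¹ ^ 2 *
    ∑' p : ℤ × ℤ,
      (1 / (z + ((p.1 : ℂ) + 1 / 2) + ((p.2 : ℂ) + 1 / 2) * τ) ^ 2 -
        1 / (((p.1 : ℂ) + 1 / 2) + ((p.2 : ℂ) + 1 / 2) * τ) ^ 2)

open Real Filter Topology Asymptotics EisensteinSeries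

-- `invSqSum w = π² / sin² (π w)`
noncomputable def invSqSum (w : ℂ) : ℂ := ∑' n : ℤ, 1 / (w + n) ^ 2

lemma summable_one_div_add_intCast_sq (w : ℂ) : Summable fun n : ℤ => 1 / (w + n) ^ 2 := by
  simpa using linear_right_summable w 1 (k := 2) le_rfl

lemma invSqSum_add_intCast (w : ℂ) (k : ℤ) : invSqSum (w + k) = invSqSum w := by
  unfold invSqSum
  rw [← (Equiv.addLeft k).tsum_eq (fun n : ℤ => 1 / (w + n) ^ 2)]
  simp [add_assoc]

lemma invSqSum_neg (w : ℂ) : invSqSum (-w) = invSqSum w := by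
  unfold invSqSum
  rw [← (Equiv.neg ℤ).tsum_eq (fun n : ℤ => 1 / (w + n) ^ 2)]
  refine tsum_congr fun n => ?_
  rw [Equiv.neg_apply, Int.cast_neg, ← neg_sq, neg_add, neg_neg]

lemma invSqSum_eq_of_im_pos {w : ℂ} (hw : 0 < w.im) :
    invSqSum w = -(4 * π ^ 2) * (cexp (2 * π * I * w) / (1 - cexp (2 * π * I * w)) ^ 2) := by
  have hq := UpperHalfPlane.norm_exp_two_pi_I_lt_one ⟨w, hw⟩
  rw [invSqSum, show w = ((⟨w, hw⟩ : UpperHalfPlane) : ℂ) from rfl,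
    qExpansion_identity le_rfl]
  simp only [pow_one]
  rw [tsum_coe_mul_geometric_of_norm_lt_one hq]
  simp only [Nat.factorial_one, Nat.cast_one, div_one]
  ring_nf
  simp [I_sq]

lemma invSqSum_sub_invSqSum_add_half_neg (w : ℂ) :
    invSqSum (-w) - invSqSum (-w + 1 / 2) = invSqSum w - invSqSum (w + 1 / 2) := by
  rw [invSqSum_neg, show -w + 1 / 2 = -(w + 1 / 2 + ((-1 : ℤ) : ℂ)) by push_cast; ring,
    invSqSum_neg, invSqSum_add_intCast]

lemma invSqSum_mul_I_sub_invSqSum_add_half {t : ℝ} (ht : 0 < t) :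
    invSqSum (t * I) - invSqSum (t * I + 1 / 2) =
      ((-(4 * π ^ 2) * (rexp (-2 * π * t) / (1 - rexp (-2 * π * t)) ^ 2 +
        rexp (-2 * π * t) / (1 + rexp (-2 * π * t)) ^ 2) : ℝ) : ℂ) := by
  have hq : cexp (2 * π * I * (t * I)) = rexp (-2 * π * t) := by
    rw [ofReal_exp]
    congr 1
    push_cast
    linear_combination (2 * π * t : ℂ) * I_sq
  have hq' : cexp (2 * π * I * (t * I + 1 / 2)) = -rexp (-2 * π * t) := by
    rw [mul_add, Complex.exp_add, hq, show 2 * π * I * (1 / 2 : ℂ) = π * I by ring, exp_pi_mul_I]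
    ring
  rw [invSqSum_eq_of_im_pos (by simpa using ht), invSqSum_eq_of_im_pos (by simpa using ht), hq, hq']
  push_cast
  ring

lemma re_invSqSum_mul_I_sub_invSqSum_add_half_neg {t : ℝ} (ht : t ≠ 0) :
    (invSqSum (t * I) - invSqSum (t * I + 1 / 2)).re < 0 := by
  wlog ht' : 0 < t generalizing t
  · have h := this (neg_ne_zero.mpr ht) (by grind)
    rwa [ofReal_neg, neg_mul, invSqSum_sub_invSqSum_add_half_neg] at h
  rw [invSqSum_mul_I_sub_invSqSum_add_half ht', ofReal_re]
  exact mul_neg_of_neg_of_pos (neg_neg_of_pos (by positivity)) (by positivity)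

noncomputable def halfLatticePt (τ : ℂ) (p : ℤ × ℤ) : ℂ :=
  ((p.1 : ℂ) + 1 / 2) + ((p.2 : ℂ) + 1 / 2) * τ

-- The coordinates of `2 * halfLatticePt τ p` in the basis `(τ, 1)`.
def doubledCoords (p : ℤ × ℤ) : Fin 2 → ℤ := ![2 * p.2 + 1, 2 * p.1 + 1]

lemma doubledCoords_injective : Function.Injective doubledCoords := by
  intro p q h
  have h0 := congrFun h 0
  have h1 := congrFun h 1
  simp only [doubledCoords, Matrix.cons_val_zero, Matrix.cons_val_one] at h0 h1
  exact Prod.ext (by omega) (by omega)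

lemma summable_norm_doubledCoords_inv_pow_three :
    Summable fun p => ‖doubledCoords p‖⁻¹ ^ 3 := by
  refine ((summable_one_div_norm_rpow (k := 3) (by norm_num)).comp_injective
    doubledCoords_injective).congr fun p => ?_
  simp [rpow_neg (norm_nonneg _), inv_pow]

lemma isBigO_inv_halfLatticePt {τ : ℂ} (hτ : 0 < τ.im) :
    (fun p => (halfLatticePt τ p)⁻¹) =O[cofinite] fun p => ‖doubledCoords p‖⁻¹ := by
  have h := ((isBigO_linear_add_const_vec ⟨τ, hτ⟩ 0 0).comp_tendsto
    doubledCoords_injective.tendsto_cofinite).const_mul_left 2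
  refine h.congr_left fun p => ?_
  simp only [Function.comp_apply, doubledCoords, halfLatticePt, Matrix.cons_val_zero,
    Matrix.cons_val_one]
  push_cast
  field_simp
  ring

lemma tendsto_inv_halfLatticePt {τ : ℂ} (hτ : 0 < τ.im) :
    Tendsto (fun p => (halfLatticePt τ p)⁻¹) cofinite (𝓝 0) := by
  refine (isBigO_inv_halfLatticePt hτ).trans_tendsto ?_
  exact ((tendsto_norm_comp_cofinite_atTop_of_isClosedEmbedding .id).comp
    doubledCoords_injective.tendsto_cofinite).inv_tendsto_atTop

lemma intCast_add_half_ne_zero (m : ℤ) : (m : ℝ) + 1 / 2 ≠ 0 := by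
  intro h
  have : ((2 * m + 1 : ℤ) : ℝ) = 0 := by push_cast; linarith
  exact absurd (Int.cast_eq_zero.mp this) (by omega)

lemma halfLatticePt_ne_zero {τ : ℂ} (hτ : 0 < τ.im) (p : ℤ × ℤ) : halfLatticePt τ p ≠ 0 := by
  intro h
  have him := congrArg Complex.im h
  simp only [halfLatticePt, add_im, mul_im, zero_im] at him
  norm_num at him
  exact him.elim (intCast_add_half_ne_zero p.2) hτ.ne'

lemma summable_one_div_add_halfLatticePt_sq_sub {τ : ℂ} (hτ : 0 < τ.im) (z : ℂ) :
    Summable fun p => 1 / (z + halfLatticePt τ p) ^ 2 - 1 / halfLatticePt τ p ^ 2 := by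
  have hu := isBigO_inv_halfLatticePt hτ
  have hv : Tendsto (fun p => 1 + z * (halfLatticePt τ p)⁻¹) cofinite (𝓝 1) := by
    simpa using tendsto_const_nhds.add ((tendsto_inv_halfLatticePt hτ).const_mul z)
  have hfac (p : ℤ × ℤ) :
      z + halfLatticePt τ p = halfLatticePt τ p * (1 + z * (halfLatticePt τ p)⁻¹) := by
    rw [mul_add, mul_one, mul_left_comm, mul_inv_cancel₀ (halfLatticePt_ne_zero hτ p), mul_one,
      add_comm]
  have hx : (fun p => (z + halfLatticePt τ p)⁻¹) =O[cofinite] fun p => ‖doubledCoords p‖⁻¹ := by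
    refine (hu.mul ((hv.inv₀ one_ne_zero).isBigO_one ℝ)).congr' (.of_eq ?_) (.of_eq ?_)
    · funext p
      rw [hfac, mul_inv]
    · funext p
      rw [mul_one]
  have hne : ∀ᶠ p in cofinite, z + halfLatticePt τ p ≠ 0 := by
    filter_upwards [hv.eventually_ne one_ne_zero] with p hp
    rw [hfac]
    exact mul_ne_zero (halfLatticePt_ne_zero hτ p) hp
  -- `(z + ω)⁻² - ω⁻² = -z (z + ω)⁻¹ ω⁻¹ ((z + ω)⁻¹ + ω⁻¹)` wherever `z + ω ≠ 0`
  refine summable_of_isBigO summable_norm_doubledCoords_inv_pow_three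
    ((((hx.mul hu).mul (hx.add hu)).const_mul_left (-z)).congr' ?_
      (.of_eq (funext fun p => by ring)))
  filter_upwards [hne] with p hp
  have := halfLatticePt_ne_zero hτ p
  field_simp
  ring

lemma hasSum_wpt {τ : ℂ} (hτ : 0 < τ.im) (z : ℂ) :
    HasSum (fun m : ℤ =>
      invSqSum (z + 1 / 2 + (m + 1 / 2) * τ) - invSqSum (1 / 2 + (m + 1 / 2) * τ))
      ((π : ℂ) ^ 2 * wpt z τ) := by
  have hF := summable_one_div_add_halfLatticePt_sq_sub hτ z
  have hwpt : (π : ℂ) ^ 2 * wpt z τ =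
      ∑' p, (1 / (z + halfLatticePt τ p) ^ 2 - 1 / halfLatticePt τ p ^ 2) := by
    have hπ : (π : ℂ) ≠ 0 := ofReal_ne_zero.mpr pi_ne_zero
    rw [wpt, ← mul_assoc, ← mul_pow, mul_inv_cancel₀ hπ, one_pow, one_mul]
    simp only [halfLatticePt, add_assoc]
  rw [hwpt]
  refine ((Equiv.prodComm ℤ ℤ).hasSum_iff.mpr hF.hasSum).prod_fiberwise fun m => ?_
  refine ((summable_one_div_add_intCast_sq _).hasSum.sub
    (summable_one_div_add_intCast_sq _).hasSum).congr_fun fun n => ?_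
  simp only [Function.comp_apply, Equiv.prodComm_apply, Prod.swap, halfLatticePt]
  ring

lemma hasSum_wpt_half {τ : ℂ} (hτ : 0 < τ.im) :
    HasSum (fun m : ℤ => invSqSum ((m + 1 / 2) * τ) - invSqSum ((m + 1 / 2) * τ + 1 / 2))
      ((π : ℂ) ^ 2 * wpt (1 / 2) τ) := by
  refine (hasSum_wpt hτ (1 / 2)).congr_fun fun m => ?_
  rw [show (1 : ℂ) / 2 + 1 / 2 + (m + 1 / 2) * τ = (m + 1 / 2) * τ + ((1 : ℤ) : ℂ) by
    push_cast; ring, invSqSum_add_intCast, add_comm (1 / 2 : ℂ)]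

theorem wpt_half_sub_one {τ : ℂ} (hτ : 0 < τ.im) : wpt (1 / 2) (τ - 1) = -wpt (1 / 2) τ := by
  have hπ : (π : ℂ) ^ 2 ≠ 0 := pow_ne_zero _ (ofReal_ne_zero.mpr pi_ne_zero)
  refine mul_left_cancel₀ hπ ((hasSum_wpt_half (by simpa using hτ)).unique ?_)
  rw [mul_neg]
  refine (hasSum_wpt_half hτ).neg.congr_fun fun m => ?_
  rw [show ((m : ℂ) + 1 / 2) * (τ - 1) + 1 / 2 = (m + 1 / 2) * τ + ((-m : ℤ) : ℂ) by
      push_cast; ring,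
    show ((m : ℂ) + 1 / 2) * (τ - 1) = (m + 1 / 2) * τ + 1 / 2 + ((-m - 1 : ℤ) : ℂ) by
      push_cast; ring,
    invSqSum_add_intCast, invSqSum_add_intCast, neg_sub]

theorem wpt_half_mul_I_ne_zero {y : ℝ} (hy : 0 < y) : wpt (1 / 2) (y * I) ≠ 0 := by
  have hrow (m : ℤ) : (invSqSum ((m + 1 / 2) * (y * I)) -
      invSqSum ((m + 1 / 2) * (y * I) + 1 / 2)).re < 0 := by
    have h := re_invSqSum_mul_I_sub_invSqSum_add_half_neg
      (mul_ne_zero (intCast_add_half_ne_zero m) hy.ne')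
    push_cast at h
    rwa [mul_assoc] at h
  have hneg := hasSum_lt (fun m => (hrow m).le) (hrow 0)
    (Complex.hasSum_re (hasSum_wpt_half (τ := y * I) (by simpa using hy))) hasSum_zero
  intro h
  rw [h, mul_zero, zero_re] at hneg
  exact lt_irrefl _ hneg

/-- `℘̃a(1/2, τ − 1) = −℘̃a(1/2, τ)`; in particular `τ ↦ ℘̃a(1/2, τ)` is `2`-periodic
but not `1`-periodic in `τ` on the upper half-plane. -/
theorem wpt_half_antiperiodic :
    (∀ τ : ℂ, 0 < τ.im → wpt (1 / 2) (τ - 1) = -wpt (1 / 2) τ) ∧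
      (∀ τ : ℂ, 0 < τ.im → wpt (1 / 2) (τ + 2) = wpt (1 / 2) τ) ∧
      ¬(∀ τ : ℂ, 0 < τ.im → wpt (1 / 2) (τ + 1) = wpt (1 / 2) τ) := by
  refine ⟨fun τ hτ => wpt_half_sub_one hτ, fun τ hτ => ?_, fun h => ?_⟩
  · have h1 := wpt_half_sub_one (τ := τ + 1) (by simpa using hτ)
    have h2 := wpt_half_sub_one (τ := τ + 2) (by simpa using hτ)
    rw [add_sub_cancel_right] at h1
    rw [show τ + 2 - 1 = τ + 1 by ring] at h2
    linear_combination h2 - h1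
  · have hI : wpt (1 / 2) I ≠ 0 := by simpa using wpt_half_mul_I_ne_zero one_pos
    have h1 := wpt_half_sub_one (τ := I + 1) (by simp)
    rw [add_sub_cancel_right, h I (by simp)] at h1
    exact hI (by linear_combination h1 / 2)
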